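/- Let p be a prime and let Λ = ℤ_p⟦T⟧ be the power series ring in one variable over the ring of p-adic integers. If M is a finitely generated Λ-module with projective dimension pd_Λ(M) ≤ 1, then M has no nonzero Λ-submodule of finite cardinality. (This is the commutative rank-one case of Venjakob's Proposition 2.2 quoted and used by the paper: over Λ(Γ) with Γ ≅ ℤ_p, pseudo-null submodules are exactly the finite submodules.) -/

import Mathlib

open PowerSeries RingTheory.Sequence
open scoped Pointwise

/-! An element `x` of a finite submodule is killed by some `p ^ a` and some `T ^ b`: among its
multiples `z ^ n • x` two coincide, and `1 - z ^ k` is a unit for `z` in the maximal ideal.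
The pair `T ^ b, p ^ a` is a regular sequence on `Λ`, hence on every flat `Λ`-module, in
particular on `F` and `K` in a resolution `0 → K → F → M → 0`. Lift `x` to `y ∈ F`: then
`p ^ a • (T ^ b • y) = T ^ b • (p ^ a • y) ∈ T ^ b • K`, so `T ^ b • y ∈ T ^ b • K` as `p ^ a` is
regular on `K / T ^ b K`, and `y ∈ K` as `T ^ b` is regular on `F`; that is, `x = 0`. -/

theorem exists_pow_smul_eq_zero_of_finite {R M : Type*} [CommRing R] [IsLocalRing R]
    [AddCommGroup M] [Module R M] {N : Submodule R M} (hN : (N : Set M).Finite) {x : M}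
    (hx : x ∈ N) {z : R} (hz : z ∈ IsLocalRing.maximalIdeal R) : ∃ a : ℕ, z ^ a • x = 0 := by
  obtain ⟨i, j, hij, heq⟩ :=
    hN.exists_lt_map_eq_of_forall_mem (f := fun n : ℕ => z ^ n • x) fun n => N.smul_mem _ hx
  have hunit : IsUnit (1 - z ^ (j - i)) :=
    IsLocalRing.isUnit_one_sub_self_of_mem_nonunits _
      ((IsLocalRing.mem_maximalIdeal _).1 (Ideal.pow_mem_of_mem _ hz _ (by omega)))
  refine ⟨i, hunit.smul_eq_zero.1 ?_⟩
  have hj : z ^ (j - i) * z ^ i = z ^ j := by rw [← pow_add, Nat.sub_add_cancel hij.le]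
  rw [smul_smul, sub_mul, one_mul, hj, sub_smul]
  exact sub_eq_zero.2 heq

theorem RingTheory.Sequence.IsWeaklyRegular.isWeaklyRegular_of_flat {R : Type*} [CommRing R]
    {rs : List R} (h : IsWeaklyRegular R rs) (P : Type*) [AddCommGroup P] [Module R P]
    [Module.Flat R P] : IsWeaklyRegular P rs :=
  ((TensorProduct.rid R P).isWeaklyRegular_congr rs).1 h.isWeaklyRegular_lTensor

theorem Submodule.mem_of_smul_mem_of_isWeaklyRegular {R F : Type*} [CommRing R]
    [AddCommGroup F] [Module R F] (K : Submodule R F) {s t : R} (hF : IsSMulRegular F s)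
    (hK : IsWeaklyRegular K [s, t]) {y : F} (hs : s • y ∈ K) (ht : t • y ∈ K) : y ∈ K := by
  simp only [isWeaklyRegular_cons_iff] at hK
  have hcomm : t • (⟨s • y, hs⟩ : K) = s • ⟨t • y, ht⟩ := Subtype.ext (smul_comm t s y)
  have hmem : (⟨s • y, hs⟩ : K) ∈ s • (⊤ : Submodule R K) :=
    mem_of_isSMulRegular_quotient_of_smul_mem hK.2.1
      (hcomm ▸ Submodule.smul_mem_pointwise_smul _ s ⊤ trivial)
  obtain ⟨k, -, hk⟩ := (Submodule.mem_smul_pointwise_iff_exists _ _ _).1 hmem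
  exact hF (congrArg Subtype.val hk) ▸ k.2

theorem LinearMap.eq_zero_of_smul_eq_zero_of_isWeaklyRegular {R F M : Type*} [CommRing R]
    [AddCommGroup F] [Module R F] [Module.Flat R F] [AddCommGroup M] [Module R M]
    {f : F →ₗ[R] M} (hf : Function.Surjective f) [Module.Flat R (LinearMap.ker f)] {s t : R}
    (hst : IsWeaklyRegular R [s, t]) {x : M} (hs : s • x = 0) (ht : t • x = 0) : x = 0 := by
  obtain ⟨y, rfl⟩ := hf x
  have hF : IsSMulRegular F s :=
    ((isWeaklyRegular_cons_iff _ _ _).1 (hst.isWeaklyRegular_of_flat F)).1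
  rw [← map_smul, ← LinearMap.mem_ker] at hs ht
  exact (LinearMap.ker f).mem_of_smul_mem_of_isWeaklyRegular hF
    (hst.isWeaklyRegular_of_flat _) hs ht

theorem PowerSeries.isWeaklyRegular_X_pow_C {R : Type*} [CommRing R] {r : R}
    (hr : IsSMulRegular R r) (b : ℕ) : IsWeaklyRegular R⟦X⟧ [X ^ b, C r] := by
  have hX : IsSMulRegular R⟦X⟧ (X : R⟦X⟧) := fun _ _ => X_mul_cancel
  refine (isWeaklyRegular_cons_iff _ _ _).2 ⟨hX.pow b, (isWeaklyRegular_cons_iff _ _ _).2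
    ⟨(isSMulRegular_quotient_iff_mem_of_smul_mem _ _).2 fun φ hφ => ?_, .nil _ _⟩⟩
  have hdvd : X ^ b ∣ C r * φ → X ^ b ∣ φ := by
    simp only [X_pow_dvd_iff, coeff_C_mul]
    exact fun h m hm => hr (by simpa using h m hm)
  simp only [Submodule.mem_smul_pointwise_iff_exists, Submodule.mem_top, true_and,
    smul_eq_mul] at hφ ⊢
  obtain ⟨ψ, hψ⟩ := hdvd (hφ.imp fun _ h => h.symm)
  exact ⟨ψ, hψ.symm⟩

theorem PowerSeries.X_mem_maximalIdeal {R : Type*} [CommRing R] [IsLocalRing R] :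
    (X : R⟦X⟧) ∈ IsLocalRing.maximalIdeal R⟦X⟧ := by
  simp [IsLocalRing.mem_maximalIdeal, mem_nonunits_iff, isUnit_iff_constantCoeff]

theorem PowerSeries.C_mem_maximalIdeal_iff {R : Type*} [CommRing R] [IsLocalRing R] {r : R} :
    C r ∈ IsLocalRing.maximalIdeal R⟦X⟧ ↔ r ∈ IsLocalRing.maximalIdeal R := by
  simp [IsLocalRing.mem_maximalIdeal, mem_nonunits_iff, isUnit_iff_constantCoeff]

theorem no_nontrivial_finite_submodule_of_pd_le_one_general
    (p : ℕ) [Fact p.Prime]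
    (M : Type*) [AddCommGroup M] [Module (PowerSeries ℤ_[p]) M]
    (hpd : ∃ (n : ℕ) (f : (Fin n → PowerSeries ℤ_[p]) →ₗ[PowerSeries ℤ_[p]] M),
      Function.Surjective f ∧
      Module.Projective (PowerSeries ℤ_[p]) (LinearMap.ker f))
    (N : Submodule (PowerSeries ℤ_[p]) M) (hN : (N : Set M).Finite) :
    N = ⊥ := by
  obtain ⟨n, f, hf, hK⟩ := hpd
  refine (Submodule.eq_bot_iff N).2 fun x hx => ?_
  obtain ⟨a, ha⟩ := exists_pow_smul_eq_zero_of_finite hN hx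
    (C_mem_maximalIdeal_iff.2 PadicInt.p_nonunit)
  obtain ⟨b, hb⟩ := exists_pow_smul_eq_zero_of_finite hN hx X_mem_maximalIdeal
  have hpa : IsSMulRegular ℤ_[p] ((p : ℤ_[p]) ^ a) :=
    (IsRegular.of_ne_zero (pow_ne_zero a (Nat.cast_ne_zero.2 (Fact.out : p.Prime).ne_zero))).left
  rw [← map_pow] at ha
  exact f.eq_zero_of_smul_eq_zero_of_isWeaklyRegular hf (isWeaklyRegular_X_pow_C hpa b) hb ha

/-- Commutative rank-one case of Venjakob's Proposition 2.2: if `M` is a finitely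
generated module over `Λ = ℤ_p⟦T⟧` of projective dimension at most `1` (i.e. `M` admits a
projective resolution of length at most `1`, equivalently a surjection from a finite free
module with projective kernel), then `M` has no nonzero `Λ`-submodule of finite
cardinality. -/
theorem no_nontrivial_finite_submodule_of_pd_le_one
    (p : ℕ) [Fact p.Prime]
    (M : Type*) [AddCommGroup M] [Module (PowerSeries ℤ_[p]) M]
    [Module.Finite (PowerSeries ℤ_[p]) M]
    (hpd : ∃ (n : ℕ) (f : (Fin n → PowerSeries ℤ_[p]) →ₗ[PowerSeries ℤ_[p]] M),
      Function.Surjective f ∧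
      Module.Projective (PowerSeries ℤ_[p]) (LinearMap.ker f))
    (N : Submodule (PowerSeries ℤ_[p]) M) (hN : (N : Set M).Finite) :
    N = ⊥ :=
  no_nontrivial_finite_submodule_of_pd_le_one_general p M hpd N hN
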